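/- arXiv:2210.00926 — 5 statements merged into one kernel-verified Lean document; each statement's English description precedes it below -/
import Mathlib

section
/- For all n ≥ 1, |N_n - a·α^n| < α^{-n/2}, where α is the real root of x^3 - x^2 - 1 and a = α²/(α³ + 2). -/
def narayana : ℕ → ℕ
  | 0 => 0
  | 1 => 1
  | 2 => 1
  | n + 3 => narayana (n + 2) + narayana n

/-- Auxiliary: a sequence vanishing at 0,1,2 and satisfying the Narayana
recurrence vanishes everywhere. -/
lemma narayana_aux_three (f : ℕ → ℝ) (h0 : f 0 = 0) (h1 : f 1 = 0) (h2 : f 2 = 0)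
    (hr : ∀ k, f (k + 3) = f (k + 2) + f k) : ∀ k, f k = 0 := by
  intro k
  induction k using Nat.strong_induction_on with
  | _ k ih =>
    match k with
    | 0 => exact h0
    | 1 => exact h1
    | 2 => exact h2
    | (m + 3) => rw [hr m, ih (m + 2) (by omega), ih m (by omega)]; ring

set_option maxHeartbeats 1000000 in
/-- For all `n ≥ 1`, `|N n - a α^n| < α^(-n/2)`. -/
theorem narayana_error_bound (α : ℝ) (hα : α ^ 3 = α ^ 2 + 1)
    (a : ℝ) (ha : a = α ^ 2 / (α ^ 3 + 2)) (n : ℕ) (hn : 1 ≤ n) :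
    |(narayana n : ℝ) - a * α ^ n| < α ^ (-(n : ℝ) / 2) := by
  -- basic bounds on α
  have hα1 : 1 < α := by nlinarith [sq_nonneg α, sq_nonneg (α - 1), sq_nonneg (α + 1)]
  have hαpos : (0 : ℝ) < α := by linarith
  have hlo : (1.4 : ℝ) < α := by nlinarith [sq_nonneg (α - 1.4), sq_nonneg (α - 1)]
  have hhi : α < (1.5 : ℝ) := by nlinarith [sq_nonneg (α - 1.5), sq_nonneg (α - 1)]
  have hd : α ^ 3 + 2 ≠ 0 := by positivity
  have ha' : a * (α ^ 3 + 2) = α ^ 2 := by rw [ha]; field_simp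
  have halow : (0.36 : ℝ) < a := by
    rw [ha, lt_div_iff₀ (by positivity)]
    nlinarith [sq_nonneg (α - 1.4), sq_nonneg (α - 1.5)]
  have hahigh : a < (0.48 : ℝ) := by
    rw [ha, div_lt_iff₀ (by positivity)]
    nlinarith [sq_nonneg (α - 1.4), sq_nonneg (α - 1.5)]
  -- the error sequence
  set e : ℕ → ℝ := fun k => (narayana k : ℝ) - a * α ^ k with he
  have hgoal_eq : (narayana n : ℝ) - a * α ^ n = e n := by rw [he]
  rw [hgoal_eq]
  have hrec3 : ∀ k, e (k + 3) = e (k + 2) + e k := by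
    intro k
    simp only [he, narayana]
    push_cast
    linear_combination (-(a * α ^ k)) * hα
  have e0 : e 0 = -a := by simp [he, show narayana 0 = 0 from rfl]
  have e1 : e 1 = 1 - a * α := by
    simp [he, show narayana 1 = 1 from rfl]
  have e2 : e 2 = 1 - a * α ^ 2 := by
    simp [he, show narayana 2 = 1 from rfl]
  have e3 : e 3 = 1 - a * α ^ 3 := by
    simp [he, show narayana 3 = 1 from rfl]
  have e4 : e 4 = 2 - a * α ^ 4 := by
    simp [he, show narayana 4 = 2 from rfl]
  -- the second-order recurrence for the error
  set f : ℕ → ℝ := fun k => α * e (k + 2) - (α - α ^ 2) * e (k + 1) + e k with hfdef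
  have hf0 : f 0 = 0 := by
    simp only [hfdef, e0, e1, e2]
    linear_combination (-a) * hα - ha'
  have hf1 : f 1 = 0 := by
    simp only [hfdef, e1, e2, e3]
    linear_combination (-(a * α) - 1) * hα + (-α) * ha'
  have hf2 : f 2 = 0 := by
    simp only [hfdef, e2, e3, e4]
    linear_combination (-(a * α ^ 2) - α - 1) * hα + (-(α ^ 2)) * ha'
  have hfr : ∀ k, f (k + 3) = f (k + 2) + f k := by
    intro k
    have h5 : e (k + 5) = e (k + 4) + e (k + 2) := hrec3 (k + 2)
    have h4 : e (k + 4) = e (k + 3) + e (k + 1) := hrec3 (k + 1)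
    have h3 : e (k + 3) = e (k + 2) + e k := hrec3 k
    simp only [hfdef]
    have e5' : e (k + 3 + 2) = e (k + 5) := rfl
    have e4' : e (k + 3 + 1) = e (k + 4) := rfl
    have e4'' : e (k + 2 + 2) = e (k + 4) := rfl
    have e3' : e (k + 2 + 1) = e (k + 3) := rfl
    have e3'' : e (k + 1 + 2) = e (k + 3) := rfl
    rw [e5', e4', e4'', e3', e3'']
    linear_combination α * h5 - (α - α ^ 2) * h4 + h3
  have hf : ∀ k, f k = 0 := narayana_aux_three f hf0 hf1 hf2 hfr
  have hrec2 : ∀ k, α * e (k + 2) = (α - α ^ 2) * e (k + 1) - e k := by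
    intro k
    have := hf k
    simp only [hfdef] at this
    linarith
  -- the Lyapunov quadratic form
  set Q : ℕ → ℝ := fun k => α * e (k + 1) ^ 2 + α * (α - 1) * e (k + 1) * e k + e k ^ 2
    with hQdef
  have hQstep : ∀ k, α * Q (k + 1) = Q k := by
    intro k
    simp only [hQdef]
    have h2' : e (k + 1 + 1) = e (k + 2) := rfl
    rw [h2']
    linear_combination (α * e (k + 2) - e k) * hrec2 k
  have hQn : ∀ k, α ^ k * Q k = Q 0 := by
    intro k
    induction k with
    | zero => simp
    | succ m ih =>
      have : α ^ (m + 1) * Q (m + 1) = α ^ m * (α * Q (m + 1)) := by ring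
      rw [this, hQstep m, ih]
  set c : ℝ := 1 - α * (α - 1) ^ 2 / 4 with hcdef
  have hcpos : (0 : ℝ) < c := by
    simp only [hcdef]; nlinarith
  clear_value c Q f e
  have hQlower : ∀ k, c * e k ^ 2 ≤ Q k := by
    intro k
    have hident : Q k - c * e k ^ 2 = α * (e (k + 1) + (α - 1) * e k / 2) ^ 2 := by
      simp only [hQdef, hcdef]; ring
    have hnn := mul_nonneg hαpos.le (sq_nonneg (e (k + 1) + (α - 1) * e k / 2))
    rw [← hident] at hnn
    linarith
  -- the key numeric inequality Q 0 < c
  have hkey : Q 0 < c := by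
    have h1 : (0.5 : ℝ) < a * α := by nlinarith only [halow, hahigh, hlo, hhi]
    have h3 : (0 : ℝ) < 1 - a * α := by nlinarith only [halow, hahigh, hlo, hhi]
    have h2 : 1 - a * α < (0.5 : ℝ) := by linarith only [h1]
    have h4 : α * (1 - a * α) ^ 2 < 0.375 := by
      have hsq : (1 - a * α) ^ 2 < 0.25 := by nlinarith only [h2, h3]
      nlinarith only [hsq, hhi, hαpos, sq_nonneg (1 - a * α)]
    have h5 : α * (α - 1) * (1 - a * α) * (-a) ≤ 0 := by
      have : 0 ≤ α * (α - 1) * (1 - a * α) * a := by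
        apply mul_nonneg
        apply mul_nonneg
        apply mul_nonneg hαpos.le (by linarith)
        · linarith
        · linarith
      linarith
    have h6 : a ^ 2 < (0.24 : ℝ) := by nlinarith only [halow, hahigh]
    have h7 : (0.9 : ℝ) < c := by
      rw [hcdef]
      nlinarith only [hlo, hhi, hα1, sq_nonneg (α - 1), sq_nonneg (α - 1.5)]
    have hQ0 : Q 0 = α * (1 - a * α) ^ 2 + α * (α - 1) * (1 - a * α) * (-a) + a ^ 2 := by
      simp only [hQdef, e0, e1]; ring
    rw [hQ0]
    linarith
  -- combine
  have hαn : (0 : ℝ) < α ^ n := by positivity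
  have hsq : e n ^ 2 < (α ^ n)⁻¹ := by
    have h1 : α ^ n * (c * e n ^ 2) ≤ α ^ n * Q n :=
      mul_le_mul_of_nonneg_left (hQlower n) hαn.le
    rw [hQn n] at h1
    have h2 : α ^ n * (c * e n ^ 2) < c := lt_of_le_of_lt h1 hkey
    have h3 : α ^ n * e n ^ 2 < 1 := by nlinarith
    rw [← one_div, lt_div_iff₀ hαn]
    linarith
  set R := α ^ (-(n : ℝ) / 2) with hR
  have hRpos : 0 < R := Real.rpow_pos_of_pos hαpos _
  have hR2 : R ^ 2 = (α ^ n)⁻¹ := by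
    rw [hR, ← Real.rpow_natCast (α ^ (-(n : ℝ) / 2)) 2, ← Real.rpow_mul hαpos.le]
    norm_num
  have hgoal : |e n| < R := by
    have h : |e n| ^ 2 < R ^ 2 := by rw [sq_abs, hR2]; exact hsq
    exact lt_of_pow_lt_pow_left₀ 2 hRpos.le h
  exact hgoal
end

section
/- Suppose N_n = (1/9)(d1·10^{m1+m2} − (d1−d2)·10^{m2} − d2) with 1 ≤ d1 ≤ 9, 0 ≤ d2 ≤ 9, m1, m2 ≥ 1 and n ≥ 1. Then (m1+m2)·log 10 − 2 < n·log α < (m1+m2)·log 10 + 1, where α is the real root of x³ − x² − 1. -/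
open Real

section Recurrence

variable {α : ℝ} (hα : α ^ 3 = α ^ 2 + 1) {u : ℕ → ℝ}
  (hu : ∀ k, u (k + 3) = u (k + 2) + u k) {c : ℝ}
include hα hu

theorem le_mul_pow_of_recurrence (h0 : u 0 ≤ c) (h1 : u 1 ≤ c * α) (h2 : u 2 ≤ c * α ^ 2)
    (k : ℕ) : u k ≤ c * α ^ k := by
  have h : ∀ k, u k ≤ c * α ^ k ∧ u (k + 1) ≤ c * α ^ (k + 1) ∧
      u (k + 2) ≤ c * α ^ (k + 2) := by
    intro k
    induction k with
    | zero => simpa using ⟨h0, h1, h2⟩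
    | succ k ih =>
      obtain ⟨hk, hk1, hk2⟩ := ih
      refine ⟨hk1, hk2, ?_⟩
      have hpow : c * α ^ (k + 3) = c * α ^ (k + 2) + c * α ^ k := by
        linear_combination c * α ^ k * hα
      rw [hu, hpow]
      linarith
  exact (h k).1

theorem mul_pow_le_of_recurrence (h0 : c ≤ u 0) (h1 : c * α ≤ u 1) (h2 : c * α ^ 2 ≤ u 2)
    (k : ℕ) : c * α ^ k ≤ u k := by
  have := le_mul_pow_of_recurrence (u := fun k => -u k) (c := -c) hα
    (fun k => by simp only [hu]; ring) (by linarith) (by linarith) (by linarith) k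
  linarith

end Recurrence

theorem narayana_root_bounds {α : ℝ} (hα : α ^ 3 = α ^ 2 + 1) : 29 / 20 < α ∧ α < 3 / 2 := by
  constructor <;> nlinarith [sq_nonneg (α - 1), sq_nonneg (α + 1), sq_nonneg α]

theorem narayana_add_two_le_pow {α : ℝ} (hα : α ^ 3 = α ^ 2 + 1) (k : ℕ) :
    (narayana (k + 2) : ℝ) ≤ α ^ k := by
  obtain ⟨hlo, -⟩ := narayana_root_bounds hα
  simpa using le_mul_pow_of_recurrence hα (u := fun k => (narayana (k + 2) : ℝ)) (c := 1)
    (fun k => by push_cast [narayana]; ring)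
    (by norm_num [narayana]) (by norm_num [narayana]; linarith)
    (by norm_num [narayana]; nlinarith) k

theorem mul_pow_le_narayana_add_four {α : ℝ} (hα : α ^ 3 = α ^ 2 + 1) (k : ℕ) :
    9 / 5 * α ^ k ≤ (narayana (k + 4) : ℝ) := by
  obtain ⟨hlo, hhi⟩ := narayana_root_bounds hα
  exact mul_pow_le_of_recurrence hα (u := fun k => (narayana (k + 4) : ℝ))
    (fun k => by push_cast [narayana]; ring)
    (by norm_num [narayana]) (by norm_num [narayana]; linarith)
    (by norm_num [narayana]; nlinarith) k

theorem four_le_of_one_lt_narayana {n : ℕ} (h : 1 < narayana n) : 4 ≤ n := by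
  by_contra! hn
  interval_cases n <;> simp [narayana] at h

theorem pow_lt_exp_one_mul_narayana {α : ℝ} (hα : α ^ 3 = α ^ 2 + 1) {n : ℕ} (hn : 4 ≤ n) :
    α ^ n < exp 1 * narayana n := by
  obtain ⟨k, rfl⟩ := Nat.exists_eq_add_of_le' hn
  obtain ⟨hlo, hhi⟩ := narayana_root_bounds hα
  have h4 : α ^ 4 < 9 / 5 * exp 1 := by
    have : α ^ 4 = α ^ 2 + α + 1 := by linear_combination (α + 1) * hα
    nlinarith [exp_one_gt_d9]
  calc α ^ (k + 4) = α ^ 4 * α ^ k := by ring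
    _ < 9 / 5 * exp 1 * α ^ k := by gcongr
    _ = exp 1 * (9 / 5 * α ^ k) := by ring
    _ ≤ exp 1 * narayana (k + 4) := by gcongr; exact mul_pow_le_narayana_add_four hα k

theorem ten_mul_narayana_lt_exp_two_mul_pow {α : ℝ} (hα : α ^ 3 = α ^ 2 + 1) {n : ℕ}
    (hn : 2 ≤ n) : 10 * (narayana n : ℝ) < exp 2 * α ^ n := by
  obtain ⟨k, rfl⟩ := Nat.exists_eq_add_of_le' hn
  obtain ⟨hlo, -⟩ := narayana_root_bounds hα
  have h2 : 10 < exp 2 * α ^ 2 := by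
    have he : exp 2 = exp 1 ^ 2 := by rw [← exp_nat_mul]; norm_num
    nlinarith [exp_one_gt_d9]
  calc 10 * (narayana (k + 2) : ℝ) ≤ 10 * α ^ k := by gcongr; exact narayana_add_two_le_pow hα k
    _ < exp 2 * α ^ 2 * α ^ k := by gcongr
    _ = exp 2 * α ^ (k + 2) := by ring

section Repdigits

variable {x : ℝ} {d1 d2 a b : ℕ}
  (hx : 9 * x = (d1 : ℝ) * 10 ^ (a + b) - ((d1 : ℝ) - (d2 : ℝ)) * 10 ^ b - (d2 : ℝ))
include hx

theorem ten_pow_le_ten_mul_of_repdigits (hd1 : 1 ≤ d1) (ha : 1 ≤ a) :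
    (10 : ℝ) ^ (a + b) ≤ 10 * x := by
  have hb : (10 : ℝ) ^ (b + 1) ≤ 10 ^ (a + b) := pow_le_pow_right₀ (by norm_num) (by omega)
  have h1b : (1 : ℝ) ≤ 10 ^ b := one_le_pow₀ (by norm_num)
  have hd1' : (1 : ℝ) ≤ d1 := by exact_mod_cast hd1
  rw [pow_succ] at hb
  nlinarith [mul_le_mul_of_nonneg_right hd1' (by linarith : (0 : ℝ) ≤ 10 ^ (a + b) - 10 ^ b),
    mul_nonneg (Nat.cast_nonneg d2 : (0 : ℝ) ≤ d2) (by linarith : (0 : ℝ) ≤ 10 ^ b - 1)]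

theorem lt_ten_pow_of_repdigits (hd1 : d1 ≤ 9) (hd2 : d2 ≤ 9) : x < 10 ^ (a + b) := by
  have hab : (10 : ℝ) ^ b ≤ 10 ^ (a + b) := pow_le_pow_right₀ (by norm_num) (by omega)
  have h1b : (1 : ℝ) ≤ 10 ^ b := one_le_pow₀ (by norm_num)
  have hd1' : (d1 : ℝ) ≤ 9 := by exact_mod_cast hd1
  have hd2' : (d2 : ℝ) ≤ 9 := by exact_mod_cast hd2
  nlinarith [mul_le_mul_of_nonneg_right hd1' (by linarith : (0 : ℝ) ≤ 10 ^ (a + b) - 10 ^ b),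
    mul_le_mul_of_nonneg_right hd2' (by linarith : (0 : ℝ) ≤ 10 ^ b - 1)]

end Repdigits

theorem log_lt_log_add_of_lt_exp_mul {x y c : ℝ} (hx : 0 < x) (h : x < exp c * y) :
    log x < log y + c := by
  have hy : 0 < y := pos_of_mul_pos_right (hx.trans h) (exp_pos c).le
  rw [log_lt_iff_lt_exp hx, exp_add, exp_log hy, mul_comm]
  exact h

theorem narayana_size_relation_general (α : ℝ) (hα : α ^ 3 = α ^ 2 + 1)
    (n d1 d2 m1 m2 : ℕ)
    (hd1 : 1 ≤ d1) (hd1' : d1 ≤ 9) (hd2 : d2 ≤ 9) (hm1 : 1 ≤ m1) (hm2 : 1 ≤ m2)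
    (heq : 9 * (narayana n : ℝ) =
      (d1 : ℝ) * 10 ^ (m1 + m2) - ((d1 : ℝ) - (d2 : ℝ)) * 10 ^ m2 - (d2 : ℝ)) :
    ((m1 + m2 : ℕ) : ℝ) * Real.log 10 - 2 < (n : ℝ) * Real.log α ∧
    (n : ℝ) * Real.log α < ((m1 + m2 : ℕ) : ℝ) * Real.log 10 + 1 := by
  have hlow := ten_pow_le_ten_mul_of_repdigits heq hd1 hm1
  have hup := lt_ten_pow_of_repdigits heq hd1' hd2
  have h100 : (10 : ℝ) ^ 2 ≤ 10 ^ (m1 + m2) := pow_le_pow_right₀ (by norm_num) (by omega)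
  have hn : 4 ≤ n := four_le_of_one_lt_narayana <| by
    exact_mod_cast (by linarith : (1 : ℝ) < narayana n)
  rw [← log_pow, ← log_pow]
  constructor
  · have := log_lt_log_add_of_lt_exp_mul (by positivity)
      (hlow.trans_lt (ten_mul_narayana_lt_exp_two_mul_pow hα (by omega)))
    linarith
  · have hα0 : 0 < α := by linarith [(narayana_root_bounds hα).1]
    exact log_lt_log_add_of_lt_exp_mul (by positivity)
      ((pow_lt_exp_one_mul_narayana hα hn).trans (by gcongr))

/-- If `N n` is a concatenation of two repdigits then
`(m1+m2)log 10 - 2 < n log α < (m1+m2)log 10 + 1`. -/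
theorem narayana_size_relation (α : ℝ) (hα : α ^ 3 = α ^ 2 + 1)
    (n d1 d2 m1 m2 : ℕ) (hn : 1 ≤ n)
    (hd1 : 1 ≤ d1) (hd1' : d1 ≤ 9) (hd2 : d2 ≤ 9) (hm1 : 1 ≤ m1) (hm2 : 1 ≤ m2)
    (heq : 9 * (narayana n : ℝ) =
      (d1 : ℝ) * 10 ^ (m1 + m2) - ((d1 : ℝ) - (d2 : ℝ)) * 10 ^ m2 - (d2 : ℝ)) :
    ((m1 + m2 : ℕ) : ℝ) * Real.log 10 - 2 < (n : ℝ) * Real.log α ∧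
    (n : ℝ) * Real.log α < ((m1 + m2 : ℕ) : ℝ) * Real.log 10 + 1 :=
  narayana_size_relation_general α hα n d1 d2 m1 m2 hd1 hd1' hd2 hm1 hm2 heq
end

section
/- Let r ≥ 1 be an integer and H > 0 a real number with H > (4r²)^r, and let L > e be a real number satisfying L/(log L)^r < H. Then L < 2^r · H · (log H)^r. -/
/-- For `u ≥ 4r²` with `r ≥ 1`, we have `2r log u ≤ u`. -/
lemma aux_two_r_log_le (r u : ℝ) (hr : 1 ≤ r) (hu : 4 * r ^ 2 ≤ u) :
    2 * r * Real.log u ≤ u := by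
  have hr0 : (0:ℝ) < r := by linarith
  have h4 : (0:ℝ) < 4 * r ^ 2 := by positivity
  have hu0 : 0 < u := lt_of_lt_of_le h4 hu
  have hC : Real.log (4 * r ^ 2) ≤ 2 * r := by
    rw [Real.log_le_iff_le_exp h4]
    have h1 : 2 * r ≤ Real.exp r := by
      have h2 := Real.add_one_le_exp (r - 1)
      have h3 : Real.exp r = Real.exp (r - 1) * Real.exp 1 := by
        rw [← Real.exp_add]; ring_nf
      nlinarith [Real.exp_one_gt_d9, Real.exp_pos (r - 1)]
    have h2 : Real.exp (2 * r) = Real.exp r * Real.exp r := by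
      rw [← Real.exp_add]; ring_nf
    nlinarith
  set d := u / (4 * r ^ 2) with hd
  have hdiv : d * (4 * r ^ 2) = u := div_mul_cancel₀ u (ne_of_gt h4)
  have hd1 : 1 ≤ d := (one_le_div h4).mpr hu
  have hB : Real.log u ≤ Real.log (4 * r ^ 2) + (d - 1) := by
    have h5 := Real.log_le_sub_one_of_pos (x := d) (by positivity)
    have h6 : Real.log d = Real.log u - Real.log (4 * r ^ 2) := by
      rw [hd, Real.log_div (ne_of_gt hu0) (ne_of_gt h4)]
    linarith
  nlinarith [mul_nonneg (sub_nonneg.2 hd1) (by nlinarith : (0:ℝ) ≤ 4 * r ^ 2 - 2 * r), hB, hC]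

/-- Lemma of Gúzman Sánchez and Luca. -/
theorem guzman_sanchez_luca (r : ℕ) (hr : 1 ≤ r) (H L : ℝ)
    (hH0 : 0 < H) (hH : ((4 * r ^ 2 : ℕ) : ℝ) ^ r < H)
    (hL : Real.exp 1 < L) (h : L / (Real.log L) ^ r < H) :
    L < 2 ^ r * H * (Real.log H) ^ r := by
  have hrr : (1:ℝ) ≤ (r:ℝ) := by exact_mod_cast hr
  have hr0 : (0:ℝ) < r := by linarith
  have h4 : (0:ℝ) < 4 * (r:ℝ) ^ 2 := by positivity
  push_cast at hH
  have hL0 : 0 < L := lt_trans (Real.exp_pos 1) hL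
  set x := Real.log L with hxdef
  have hx1 : 1 < x := by
    have h1 := Real.log_lt_log (Real.exp_pos 1) hL
    simpa using h1
  have hx0 : 0 < x := by linarith
  have hLx : L = Real.exp x := (Real.exp_log hL0).symm
  have hxr : 0 < x ^ r := pow_pos hx0 r
  have hLH : Real.exp x < H * x ^ r := by
    have h1 : L / x ^ r * x ^ r < H * x ^ r := mul_lt_mul_of_pos_right h hxr
    rw [div_mul_cancel₀ L (ne_of_gt hxr)] at h1
    rw [← hLx]; exact h1
  have hlogH : (r:ℝ) < Real.log H := by
    have h1 : Real.log ((4 * (r:ℝ) ^ 2) ^ r) < Real.log H :=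
      Real.log_lt_log (pow_pos h4 r) hH
    rw [Real.log_pow] at h1
    have h2 : (1:ℝ) < Real.log (4 * (r:ℝ) ^ 2) := by
      rw [Real.lt_log_iff_exp_lt h4]
      nlinarith [Real.exp_one_lt_d9]
    nlinarith
  set y := 2 * Real.log H with hy
  have hyr : (r:ℝ) < y := by nlinarith
  have hy0 : 0 < y := by linarith
  suffices hxy : x < y by
    have h1 : x ^ r < y ^ r := pow_lt_pow_left₀ hxy hx0.le (by omega)
    calc L < H * x ^ r := by rw [hLx]; exact hLH
      _ < H * y ^ r := mul_lt_mul_of_pos_left h1 hH0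
      _ = 2 ^ r * H * (Real.log H) ^ r := by rw [hy, mul_pow]; ring
  by_contra hc
  push_neg at hc
  -- monotonicity of exp t / t^r for t ≥ r : compare at y ≤ x
  have key : x ^ r * Real.exp y ≤ y ^ r * Real.exp x := by
    have h1 : x / y ≤ Real.exp ((x - y) / y) := by
      have h2 := Real.add_one_le_exp ((x - y) / y)
      have h3 : (x - y) / y + 1 = x / y := by field_simp; ring
      linarith
    have h2 : (x / y) ^ r ≤ Real.exp ((x - y) / y) ^ r :=
      pow_le_pow_left₀ (by positivity) h1 r
    rw [← Real.exp_nat_mul] at h2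
    have h3 : (r:ℝ) * ((x - y) / y) ≤ x - y := by
      have h4 : (r:ℝ) * ((x - y) / y) = (x - y) * ((r:ℝ) / y) := by ring
      have h5 : (r:ℝ) / y ≤ 1 := (div_le_one hy0).mpr hyr.le
      have h6 : 0 ≤ x - y := by linarith
      nlinarith
    have h7 : (x / y) ^ r ≤ Real.exp (x - y) := h2.trans (Real.exp_le_exp.2 h3)
    rw [div_pow, Real.exp_sub] at h7
    rw [div_le_div_iff₀ (pow_pos hy0 r) (Real.exp_pos y)] at h7
    linarith [h7]
  have hexpy : Real.exp y = H ^ 2 := by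
    rw [hy, two_mul, Real.exp_add, Real.exp_log hH0]; ring
  have hyH : H < y ^ r := by
    have h1 : x ^ r * H ^ 2 ≤ y ^ r * Real.exp x := by rw [← hexpy]; exact key
    have h2 : y ^ r * Real.exp x < y ^ r * (H * x ^ r) :=
      mul_lt_mul_of_pos_left hLH (pow_pos hy0 r)
    have h3 : x ^ r * H ^ 2 < y ^ r * (H * x ^ r) := lt_of_le_of_lt h1 h2
    have h4 : H ^ 2 < y ^ r * H := by
      have := (mul_lt_mul_iff_right₀ hxr).mp (by nlinarith : x ^ r * H ^ 2 < x ^ r * (y ^ r * H))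
      exact this
    nlinarith
  have h4y : 4 * (r:ℝ) ^ 2 < y := by
    have h1 : (4 * (r:ℝ) ^ 2) ^ r < y ^ r := lt_trans hH hyH
    exact lt_of_pow_lt_pow_left₀ r hy0.le h1
  have haux : 2 * (r:ℝ) * Real.log y ≤ y := aux_two_r_log_le r y hrr h4y.le
  have hle : y ^ r ≤ H := by
    have h1 : Real.log (y ^ r) ≤ Real.log H := by
      rw [Real.log_pow]; nlinarith
    calc y ^ r = Real.exp (Real.log (y ^ r)) := (Real.exp_log (pow_pos hy0 r)).symm
      _ ≤ Real.exp (Real.log H) := Real.exp_le_exp.2 h1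
      _ = H := Real.exp_log hH0
  linarith
end

section
/- Let α be the real root of x³ − x² − 1 and a = α²/(α³ + 2). For any integers n ≥ 1, m ≥ 1 and digit d with 1 ≤ d ≤ 9, we have a·α^n ≠ (d/9)·10^m. -/
private lemma int_cubic2 (k : ℤ) : k ^ 3 - 2 * k ^ 2 + k + 1 ≠ 0 := by
  intro h
  rcases lt_trichotomy k 0 with hk | hk | hk
  · nlinarith [sq_nonneg k, mul_nonneg (sq_nonneg k) (by linarith : (0:ℤ) ≤ -(k+1))]
  · simp [hk] at h
  · nlinarith [mul_nonneg hk.le (sq_nonneg (k - 1))]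

private lemma den_one_of_dvd (x : ℚ) (h : (x.den : ℤ) ∣ x.num ^ 3) : x.den = 1 := by
  have h2 : x.den ∣ x.num.natAbs ^ 3 := by
    have := Int.natAbs_dvd_natAbs.mpr h
    simpa [Int.natAbs_pow] using this
  exact Nat.Coprime.eq_one_of_dvd (x.reduced.symm.pow_right 3) h2

private lemma num_mul (x : ℚ) : (x.num : ℚ) = x * x.den := by
  field_simp
  exact (Rat.mul_den_eq_num x).symm

private lemma rat_cubic1 (x : ℚ) : x ^ 3 ≠ x ^ 2 + 1 := by
  intro h
  have key2 : (x.num : ℚ) ^ 3 = (x.num : ℚ) ^ 2 * x.den + (x.den : ℚ) ^ 3 := by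
    rw [num_mul x]; linear_combination ((x.den : ℚ)) ^ 3 * h
  have key : x.num ^ 3 = x.num ^ 2 * x.den + (x.den : ℤ) ^ 3 := by exact_mod_cast key2
  have hdvd : (x.den : ℤ) ∣ x.num ^ 3 := ⟨x.num ^ 2 + (x.den : ℤ) ^ 2, by linarith⟩
  have h1 : x.den = 1 := den_one_of_dvd x hdvd
  rw [h1] at key; push_cast at key
  revert key
  intro key
  rcases le_or_gt x.num 1 with hk | hk
  · nlinarith [mul_nonneg (sq_nonneg x.num) (by linarith : (0:ℤ) ≤ 1 - x.num)]
  · nlinarith [sq_nonneg x.num, mul_nonneg (sq_nonneg x.num) (by linarith : (0:ℤ) ≤ x.num - 1)]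

private lemma rat_cubic2 (x : ℚ) : x ^ 3 - 2 * x ^ 2 + x + 1 ≠ 0 := by
  intro h
  have key2 : (x.num : ℚ) ^ 3 - 2 * (x.num : ℚ) ^ 2 * x.den + (x.num : ℚ) * (x.den : ℚ) ^ 2
      + (x.den : ℚ) ^ 3 = 0 := by
    rw [num_mul x]; linear_combination ((x.den : ℚ)) ^ 3 * h
  have key : x.num ^ 3 - 2 * x.num ^ 2 * x.den + x.num * (x.den : ℤ) ^ 2 + (x.den : ℤ) ^ 3 = 0 := by
    exact_mod_cast key2
  have hdvd : (x.den : ℤ) ∣ x.num ^ 3 :=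
    ⟨2 * x.num ^ 2 - x.num * x.den - (x.den : ℤ) ^ 2, by linarith⟩
  have h1 : x.den = 1 := den_one_of_dvd x hdvd
  rw [h1] at key; push_cast at key
  exact int_cubic2 x.num (by linarith)


private lemma alpha_ne_rat (α : ℝ) (hα : α ^ 3 = α ^ 2 + 1) (x : ℚ) : α ≠ (x : ℝ) := by
  intro h
  apply rat_cubic1 x
  have : (x : ℝ) ^ 3 = (x : ℝ) ^ 2 + 1 := by rw [← h]; exact hα
  exact_mod_cast this

private lemma indepQ (α : ℝ) (hα : α ^ 3 = α ^ 2 + 1) (p q r : ℚ)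
    (h : (p : ℝ) + (q : ℝ) * α + (r : ℝ) * α ^ 2 = 0) : p = 0 ∧ q = 0 ∧ r = 0 := by
  by_cases hr : r = 0
  · by_cases hq : q = 0
    · refine ⟨?_, hq, hr⟩
      rw [hq, hr] at h
      push_cast at h
      simp at h
      exact_mod_cast h
    · exfalso
      apply alpha_ne_rat α hα (-p / q)
      have hq' : (q : ℝ) ≠ 0 := by exact_mod_cast hq
      rw [hr] at h
      push_cast at h ⊢
      field_simp
      linarith
  · exfalso
    have hr' : (r : ℝ) ≠ 0 := by exact_mod_cast hr
    set s : ℚ := -p / r with hs_def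
    set t : ℚ := -q / r with ht_def
    have hs : α ^ 2 = (s : ℝ) + (t : ℝ) * α := by
      rw [hs_def, ht_def]
      push_cast
      field_simp
      linear_combination h
    have h3 : ((s * t - s - 1 : ℚ) : ℝ) + ((s + t ^ 2 - t : ℚ) : ℝ) * α = 0 := by
      push_cast
      linear_combination hα + (1 - α - (t : ℝ)) * hs
    by_cases hc : s + t ^ 2 - t = 0
    · have hc' : ((s + t ^ 2 - t : ℚ) : ℝ) = 0 := by exact_mod_cast hc
      rw [hc', zero_mul, add_zero] at h3
      have h4 : s * t - s - 1 = 0 := by exact_mod_cast h3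
      apply rat_cubic2 t
      have hst : s = t - t ^ 2 := by linarith [hc]
      rw [hst] at h4
      linarith [h4]
    · apply alpha_ne_rat α hα ((1 + s - s * t) / (s + t ^ 2 - t))
      have hc'' : (s : ℝ) + (t : ℝ) ^ 2 - (t : ℝ) ≠ 0 := by exact_mod_cast hc
      push_cast at h3 ⊢
      rw [eq_div_iff hc'']
      linear_combination h3


private def abc : ℕ → ℤ × ℤ × ℤ
  | 0 => (1, 0, 0)
  | k + 1 => ((abc k).2.2, (abc k).1, (abc k).2.1 + (abc k).2.2)

private lemma abc_spec (α : ℝ) (hα : α ^ 3 = α ^ 2 + 1) (k : ℕ) :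
    α ^ k = ((abc k).1 : ℝ) + ((abc k).2.1 : ℝ) * α + ((abc k).2.2 : ℝ) * α ^ 2 := by
  induction k with
  | zero => simp [abc]
  | succ k ih =>
    rw [pow_succ, ih]
    simp only [abc]
    push_cast
    linear_combination ((abc k).2.2 : ℝ) * hα
  
private lemma abc_pos (k : ℕ) (hk : 4 ≤ k) :
    1 ≤ (abc k).1 ∧ 1 ≤ (abc k).2.1 ∧ 1 ≤ (abc k).2.2 := by
  induction k, hk using Nat.le_induction with
  | base => norm_num [abc]
  | succ k hk ih =>
    obtain ⟨h1, h2, h3⟩ := ih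
    simp only [abc]
    exact ⟨h3, h1, by omega⟩

/-- Nonvanishing of the first linear form: `a α^n ≠ (d/9) 10^m`. -/
theorem lambda_one_nonzero (α : ℝ) (hα : α ^ 3 = α ^ 2 + 1)
    (a : ℝ) (ha : a = α ^ 2 / (α ^ 3 + 2))
    (n m d : ℕ) (hn : 1 ≤ n) (hm : 1 ≤ m) (hd1 : 1 ≤ d) (hd2 : d ≤ 9) :
    a * α ^ n ≠ ((d : ℝ) / 9) * 10 ^ m := by
  intro h
  have h2 : α ^ 3 + 2 = α ^ 2 + 3 := by linarith
  have hne : α ^ 2 + 3 ≠ 0 := by positivity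
  rw [ha, h2] at h
  -- α^(n+2) = (d/9)*10^m*(α^2+3)
  have hpow : α ^ (n + 2) = ((d : ℝ) / 9) * 10 ^ m * (α ^ 2 + 3) := by
    have : α ^ (n + 2) = α ^ 2 * α ^ n := by ring
    rw [this]
    field_simp at h
    field_simp
    linarith
  set A := (abc (n + 2)).1 with hA
  set B := (abc (n + 2)).2.1 with hB
  set C := (abc (n + 2)).2.2 with hC
  have hspec := abc_spec α hα (n + 2)
  rw [hpow] at hspec
  -- rational coefficients
  set e : ℚ := (d : ℚ) * 10 ^ m / 9 with he
  have hcomb : (((A : ℚ) - 3 * e : ℚ) : ℝ) + ((B : ℚ) : ℝ) * α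
      + (((C : ℚ) - e : ℚ) : ℝ) * α ^ 2 = 0 := by
    rw [he]
    push_cast
    linear_combination -hspec
  obtain ⟨e1, e2, e3⟩ := indepQ α hα _ _ _ hcomb
  have hB0 : B = 0 := by exact_mod_cast e2
  have hAC : (A : ℚ) = 3 * (C : ℚ) := by
    have : (A : ℚ) - 3 * e - 3 * ((C : ℚ) - e) = 0 := by rw [e1]; linarith [e3]
    linarith
  have hAC' : A = 3 * C := by exact_mod_cast hAC
  rcases Nat.lt_or_ge n 2 with hn2 | hn2
  · interval_cases n
    · -- n = 1 : abc 3 = (1,0,1)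
      have : A = 1 ∧ C = 1 := by
        constructor <;> simp [hA, hC, abc]
      omega
  · have := abc_pos (n + 2) (by omega)
    omega
end

section
/- Let α be the real root of x³ − x² − 1 and a = α²/(α³ + 2). For integers n ≥ 1, m1, m2 ≥ 1 and digits d1 ∈ {1,...,9}, d2 ∈ {0,...,9}, we have a·α^n ≠ ((d1·10^{m1} − (d1 − d2))/9)·10^{m2}. -/
/-!
Since `α ^ 2 / (α ^ 3 + 2) = α ^ 2 / (α ^ 2 + 3)`, a rational value `q` of `a α ^ n` would give
`α ^ (n + 2) = 3 q + q α ^ 2`. Reducing powers with `α ^ 3 = α ^ 2 + 1` writes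
`α ^ k = A + B α + C α ^ 2` with natural coefficients, and `1, α, α ^ 2` are linearly independent
over `ℚ` because `X ^ 3 - X ^ 2 - 1` has no rational root. So `B = 0` and `A = 3 C`, which never
happens: `B > 0` once `k ≥ 4`, and the first four triples are checked directly.
-/

open Polynomial

theorem irreducible_X_pow_three_sub_X_sq_sub_one : Irreducible (X ^ 3 - X ^ 2 - 1 : ℚ[X]) := by
  refine irreducible_of_degree_le_three_of_not_isRoot ?_ fun q hq => ?_
  · rw [show (X ^ 3 - X ^ 2 - 1 : ℚ[X]).natDegree = 3 by compute_degree!]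
    decide
  obtain ⟨r, rfl⟩ : ∃ r : ℤ, (r : ℚ) = q :=
    isInteger_of_is_root_of_monic (p := (X ^ 3 - X ^ 2 - 1 : ℤ[X])) (by monicity!)
      (by simpa using hq)
  have hr : r ^ 2 * (r - 1) = 1 := by
    have hq' : (r : ℚ) ^ 3 - r ^ 2 - 1 = 0 := by simpa using hq
    exact_mod_cast (by linear_combination hq' : (r : ℚ) ^ 2 * (r - 1) = 1)
  rcases le_or_gt r 1 with h | h <;> nlinarith [sq_nonneg r]

/-- `α (A + B α + C α ^ 2) = C + A α + (B + C) α ^ 2` when `α ^ 3 = α ^ 2 + 1`. -/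
def powCoords : ℕ → ℕ × ℕ × ℕ
  | 0 => (1, 0, 0)
  | k + 1 => ((powCoords k).2.2, (powCoords k).1, (powCoords k).2.1 + (powCoords k).2.2)

theorem pow_eq_powCoords {R : Type*} [CommRing R] {α : R} (hα : α ^ 3 = α ^ 2 + 1) (k : ℕ) :
    α ^ k = (powCoords k).1 + (powCoords k).2.1 * α + (powCoords k).2.2 * α ^ 2 := by
  induction k with
  | zero => simp [powCoords]
  | succ k ih =>
    rw [pow_succ, ih, powCoords]
    push_cast
    linear_combination ((powCoords k).2.2 : R) * hα

theorem powCoords_add_two_snd_snd_pos (j : ℕ) : 0 < (powCoords (j + 2)).2.2 := by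
  induction j with
  | zero => decide
  | succ j ih => exact ih.trans_le (Nat.le_add_left _ _)

theorem powCoords_fst_ne_three_mul_of_snd_fst_eq_zero :
    ∀ k, (powCoords k).2.1 = 0 → (powCoords k).1 ≠ 3 * (powCoords k).2.2
  | 0 | 1 | 2 | 3 => by decide
  | j + 4 => fun hB => absurd hB (powCoords_add_two_snd_snd_pos j).ne'

section Field

variable {K : Type*} [Field K] [CharZero K] {α : K}

theorem minpoly_eq_X_pow_three_sub_X_sq_sub_one (hα : α ^ 3 = α ^ 2 + 1) :
    minpoly ℚ α = X ^ 3 - X ^ 2 - 1 :=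
  (minpoly.eq_of_irreducible_of_monic irreducible_X_pow_three_sub_X_sq_sub_one
    (by simp [hα]) (by monicity!)).symm

theorem eq_zero_of_add_mul_add_mul_sq_eq_zero (hα : α ^ 3 = α ^ 2 + 1) {c₀ c₁ c₂ : ℚ}
    (h : (c₀ : K) + c₁ * α + c₂ * α ^ 2 = 0) : c₀ = 0 ∧ c₁ = 0 ∧ c₂ = 0 := by
  have hli := linearIndependent_pow (K := ℚ) α
  rw [minpoly_eq_X_pow_three_sub_X_sq_sub_one hα,
    show (X ^ 3 - X ^ 2 - 1 : ℚ[X]).natDegree = 3 by compute_degree!] at hli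
  have hc := Fintype.linearIndependent_iff.1 hli ![c₀, c₁, c₂]
    (by simpa [Fin.sum_univ_three, Rat.smul_def] using h)
  exact ⟨hc 0, hc 1, hc 2⟩

theorem pow_ne_ratCast_mul_sq_add_three (hα : α ^ 3 = α ^ 2 + 1) (k : ℕ) (q : ℚ) :
    α ^ k ≠ q * (α ^ 2 + 3) := by
  intro h
  set c := powCoords k
  obtain ⟨hA, hB, hC⟩ := eq_zero_of_add_mul_add_mul_sq_eq_zero hα
    (c₀ := c.1 - 3 * q) (c₁ := c.2.1) (c₂ := c.2.2 - q)
    (by push_cast; linear_combination h - pow_eq_powCoords hα k)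
  refine powCoords_fst_ne_three_mul_of_snd_fst_eq_zero k (by exact_mod_cast hB) ?_
  exact_mod_cast (by linear_combination hA - 3 * hC : (c.1 : ℚ) = 3 * c.2.2)

end Field

theorem irrational_sq_div_pow_three_add_two_mul_pow {α : ℝ} (hα : α ^ 3 = α ^ 2 + 1) (n : ℕ) :
    Irrational (α ^ 2 / (α ^ 3 + 2) * α ^ n) := by
  rintro ⟨q, hq⟩
  have hpos : 0 < α ^ 2 + 3 := by positivity
  rw [show α ^ 3 + 2 = α ^ 2 + 3 by rw [hα]; ring, div_mul_eq_mul_div, eq_div_iff hpos.ne'] at hq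
  exact pow_ne_ratCast_mul_sq_add_three hα (n + 2) q (by rw [pow_add]; linear_combination -hq)

theorem lambda_two_nonzero_general (α : ℝ) (hα : α ^ 3 = α ^ 2 + 1)
    (a : ℝ) (ha : a = α ^ 2 / (α ^ 3 + 2))
    (n m1 m2 d1 d2 : ℕ) :
    a * α ^ n ≠ (((d1 : ℝ) * 10 ^ m1 - ((d1 : ℝ) - (d2 : ℝ))) / 9) * 10 ^ m2 := by
  subst ha
  have h := (irrational_sq_div_pow_three_add_two_mul_pow hα n).ne_rat
    ((d1 * 10 ^ m1 - (d1 - d2)) / 9 * 10 ^ m2)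
  exact_mod_cast h

/-- Nonvanishing of the second linear form. -/
theorem lambda_two_nonzero (α : ℝ) (hα : α ^ 3 = α ^ 2 + 1)
    (a : ℝ) (ha : a = α ^ 2 / (α ^ 3 + 2))
    (n m1 m2 d1 d2 : ℕ) (hn : 1 ≤ n) (hm1 : 1 ≤ m1) (hm2 : 1 ≤ m2)
    (hd1 : 1 ≤ d1) (hd1' : d1 ≤ 9) (hd2 : d2 ≤ 9) :
    a * α ^ n ≠ (((d1 : ℝ) * 10 ^ m1 - ((d1 : ℝ) - (d2 : ℝ))) / 9) * 10 ^ m2 :=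
  lambda_two_nonzero_general α hα a ha n m1 m2 d1 d2
end
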